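/- arXiv:0801.4835 — 3 statements merged into one kernel-verified Lean document; each statement's English description precedes it below -/
import Mathlib

section
/- Let P ⊆ ℝ^d be a polytrope of affine dimension d. Then P is a tropical simplex: there exist d+1 points v_0, v_1, …, v_d ∈ ℝ^d with P = tconv{v_0, v_1, …, v_d}; moreover, P is not the tropical convex hull of any set of at most d points. -/
open Set

noncomputable section

/-- Extended (homogeneous) coordinates of a point of `TA^d ≅ ℝ^d`:
the 0-th coordinate is normalized to `0`. -/
def ext {d : ℕ} (x : Fin d → ℝ) : Fin (d + 1) → ℝ := Fin.cons 0 x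

/-- The tropical combination of `(l, x)` and `(m, y)`. -/
def tropComb {d : ℕ} (l m : ℝ) (x y : Fin d → ℝ) : Fin d → ℝ :=
  fun i => min (l + x i) (m + y i) - min l m

/-- A set is tropically convex if it is closed under tropical combinations. -/
def TropConvex {d : ℕ} (S : Set (Fin d → ℝ)) : Prop :=
  ∀ x ∈ S, ∀ y ∈ S, ∀ l m : ℝ, tropComb l m x y ∈ S

/-- The tropical convex hull: the intersection of all tropically convex supersets. -/
def tconv {d : ℕ} (V : Set (Fin d → ℝ)) : Set (Fin d → ℝ) :=
  ⋂₀ {S : Set (Fin d → ℝ) | TropConvex S ∧ V ⊆ S}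

/-- A tropical polytope is the tropical convex hull of a finite set. -/
def IsTropPolytope {d : ℕ} (P : Set (Fin d → ℝ)) : Prop :=
  ∃ V : Finset (Fin d → ℝ), P = tconv (V : Set (Fin d → ℝ))

/-- A polytrope is a tropical polytope which is also convex in the ordinary sense. -/
def IsPolytrope {d : ℕ} (P : Set (Fin d → ℝ)) : Prop :=
  IsTropPolytope P ∧ Convex ℝ P

/-!
A point `x` lies in `tconv V` iff each coordinate `i` maximizes `j ↦ x_j - v_j` for some `v ∈ V`.
So `tconv V` is compact and its frontier lies on the hyperplanes `x_p - x_q = v_p - v_q`; if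
`#V ≤ d`, two coordinates pick the same `v`, so all of `tconv V` lies on them.

For a convex `P = tconv V` with interior, let `c p q = max_P (x_p - x_q)` and
`Q = {x | ∀ p q, x_p - x_q ≤ c p q} ⊇ P`. `Q` is the tropical hull of the `d + 1` columns of `c`,
which lie in `Q`, so it suffices that `Q ⊆ P`. Otherwise the connected set `int Q` meets the
frontier of `P`, and some `x₀ ∈ int Q` has a neighbourhood in which this frontier lies on a single
hyperplane `x_p - x_q = γ`. The convex set `P` then lies on one side of it, forcing `c p q = γ` or
`c q p = -γ`, which is impossible at an interior point of `Q`.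
-/

section ConvexGeometry

open Filter Topology

theorem exists_isOpen_inter_subset_of_subset_biUnion {X ι : Type*} [TopologicalSpace X]
    {F U : Set X} {C : ι → Set X} (s : Finset ι) (hC : ∀ i ∈ s, IsClosed (C i))
    (hU : IsOpen U) (hne : (F ∩ U).Nonempty) (hcov : F ∩ U ⊆ ⋃ i ∈ s, C i) :
    ∃ i ∈ s, ∃ W, IsOpen W ∧ W ⊆ U ∧ (F ∩ W).Nonempty ∧ F ∩ W ⊆ C i := by
  classical
  induction s using Finset.induction_on generalizing U with
  | empty =>
    obtain ⟨x, hx⟩ := hne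
    simpa using hcov hx
  | insert a s ha ih =>
    have hCs : ∀ i ∈ s, IsClosed (C i) := fun i hi => hC i (Finset.mem_insert_of_mem hi)
    by_cases hW : (F ∩ (U ∩ (⋃ i ∈ s, C i)ᶜ)).Nonempty
    · refine ⟨a, Finset.mem_insert_self a s, _,
        hU.inter (isClosed_biUnion_finset hCs).isOpen_compl, inter_subset_left, hW, ?_⟩
      rintro x ⟨hxF, hxU, hxs⟩
      have := hcov ⟨hxF, hxU⟩
      rw [Finset.set_biUnion_insert] at this
      exact this.resolve_right hxs
    · obtain ⟨i, hi, h⟩ := ih hCs hU hne fun x hx => by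
        by_contra hxs
        exact hW ⟨x, hx.1, hx.2, hxs⟩
      exact ⟨i, Finset.mem_insert_of_mem hi, h⟩

theorem IsPreconnected.subset_or_disjoint_of_disjoint_frontier {X : Type*} [TopologicalSpace X]
    {S K : Set X} (hS : IsPreconnected S) (h : Disjoint S (frontier K)) :
    S ⊆ K ∨ Disjoint S K := by
  have hcover : S ⊆ interior K ∪ (closure K)ᶜ := fun x hxS => by
    by_contra hx
    simp only [mem_union, mem_compl_iff, not_or, not_not] at hx
    exact disjoint_left.1 h hxS ⟨hx.2, hx.1⟩
  by_cases hSK : (S ∩ interior K).Nonempty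
  · exact Or.inl ((hS.subset_left_of_subset_union isOpen_interior isClosed_closure.isOpen_compl
      (disjoint_compl_right_iff_subset.2 interior_subset_closure) hcover hSK).trans
      interior_subset)
  · refine Or.inr (disjoint_left.2 fun x hxS hxK => ?_)
    rcases hcover hxS with hx | hx
    · exact hSK ⟨x, hxS, hx⟩
    · exact hx (subset_closure hxK)

variable {E : Type*} [NormedAddCommGroup E] [NormedSpace ℝ E]

lemma tendsto_add_smul_nhdsGT (x w : E) :
    Tendsto (fun t : ℝ => x + t • w) (𝓝[>] 0) (𝓝 x) := by
  have : Continuous fun t : ℝ => x + t • w := by fun_prop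
  simpa using (this.tendsto 0).mono_left nhdsWithin_le_nhds

lemma lt_of_mem_interior_setOf_le {g : E →L[ℝ] ℝ} {u : E} (hu : 0 < g u) {c : ℝ} {x : E}
    (hx : x ∈ interior {y | g y ≤ c}) : g x < c := by
  obtain ⟨t, ht, ht0⟩ := (((tendsto_add_smul_nhdsGT x u).eventually
    (mem_interior_iff_mem_nhds.1 hx)).and self_mem_nhdsWithin).exists
  have : g x + t * g u ≤ c := by simpa using ht
  nlinarith [mul_pos ht0 hu]

lemma Convex.forall_le_of_disjoint_inter_halfSpace {K B : Set E} (hK : Convex ℝ K) {x₀ : E}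
    (hx₀ : x₀ ∈ K) (hB : B ∈ 𝓝 x₀) (g : E →L[ℝ] ℝ)
    (h : Disjoint (B ∩ {x | g x₀ < g x}) K) : ∀ x ∈ K, g x ≤ g x₀ := by
  intro x hx
  by_contra! hlt
  obtain ⟨t, htB, ht⟩ := (((tendsto_add_smul_nhdsGT x₀ (x - x₀)).eventually hB).and
    (Ioo_mem_nhdsGT one_pos)).exists
  have hgt : g x₀ < g (x₀ + t • (x - x₀)) := by
    simp only [map_add, map_smul, map_sub, smul_eq_mul]
    nlinarith [mul_pos ht.1 (sub_pos.2 hlt)]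
  exact disjoint_left.1 h ⟨htB, hgt⟩ (hK.add_smul_sub_mem hx₀ hx ⟨ht.1.le, ht.2.le⟩)

theorem Convex.forall_le_or_forall_ge_of_frontier_subset {K U : Set E} (hK : Convex ℝ K)
    (hKc : IsClosed K) {x₀ : E} (hx₀ : x₀ ∈ frontier K) (hU : U ∈ 𝓝 x₀)
    {g : E →L[ℝ] ℝ} (hfr : frontier K ∩ U ⊆ {x | g x = g x₀}) :
    (∀ x ∈ K, g x ≤ g x₀) ∨ ∀ x ∈ K, g x₀ ≤ g x := by
  have hx₀K : x₀ ∈ K := hKc.frontier_subset hx₀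
  rcases eq_or_ne g 0 with rfl | hg
  · simp
  obtain ⟨u, hu⟩ : ∃ u, 0 < g u := by
    obtain ⟨u, hu⟩ := DFunLike.ne_iff.1 hg
    rcases (show g u ≠ 0 from hu).lt_or_gt with h | h
    · exact ⟨-u, by simpa using h⟩
    · exact ⟨u, h⟩
  obtain ⟨ρ, hρ, hρU⟩ := Metric.mem_nhds_iff.1 hU
  have hB : Metric.ball x₀ ρ ∈ 𝓝 x₀ := Metric.ball_mem_nhds x₀ hρ
  -- The two open half-balls miss the frontier, so each lies in `K` or misses it;
  -- if both lie in `K`, then so does the whole ball and `x₀` is interior.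
  have hside (S : Set E) (hS : Convex ℝ S) (hSB : S ⊆ Metric.ball x₀ ρ)
      (hSg : ∀ x ∈ S, g x ≠ g x₀) : S ⊆ K ∨ Disjoint S K :=
    hS.isPreconnected.subset_or_disjoint_of_disjoint_frontier
      (disjoint_left.2 fun x hxS hxfr => hSg x hxS (hfr ⟨hxfr, hρU (hSB hxS)⟩))
  have hgt : Convex ℝ {x | g x₀ < g x} := convex_halfSpace_gt g.isLinear _
  have hlt : Convex ℝ {x | g x < g x₀} := convex_halfSpace_lt g.isLinear _
  rcases hside _ ((convex_ball x₀ ρ).inter hgt) inter_subset_left (fun x hx => hx.2.ne')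
    with hup | hup
  · rcases hside _ ((convex_ball x₀ ρ).inter hlt) inter_subset_left (fun x hx => hx.2.ne)
      with hdn | hdn
    · have hBK : Metric.ball x₀ ρ ⊆ K := by
        intro y hy
        rcases lt_or_ge (g y) (g x₀) with h | h
        · exact hdn ⟨hy, h⟩
        · refine hKc.mem_of_tendsto (tendsto_add_smul_nhdsGT y u) ?_
          filter_upwards [(tendsto_add_smul_nhdsGT y u).eventually
            (Metric.isOpen_ball.mem_nhds hy), self_mem_nhdsWithin] with t htB ht0
          refine hup ⟨htB, ?_⟩
          simp only [mem_ofPred_eq, map_add, map_smul, smul_eq_mul]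
          nlinarith [mul_pos (show (0 : ℝ) < t from ht0) hu]
      exact absurd (mem_interior_iff_mem_nhds.2 (mem_of_superset hB hBK)) hx₀.2
    · refine Or.inr fun x hx => ?_
      have := hK.forall_le_of_disjoint_inter_halfSpace hx₀K hB (-g) (by simpa using hdn) x hx
      simpa using this
  · exact Or.inl (hK.forall_le_of_disjoint_inter_halfSpace hx₀K hB g hup)

theorem Convex.subset_of_frontier_inter_subset_biUnion {ι : Type*} {K U : Set E}
    (hK : Convex ℝ K) (hKc : IsClosed K) (hU : IsOpen U) (hUc : IsPreconnected U)
    (hUK : (U ∩ K).Nonempty) {s : Finset ι} {g : ι → E →L[ℝ] ℝ} {γ : ι → ℝ}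
    (hfr : frontier K ∩ U ⊆ ⋃ i ∈ s, {x | g i x = γ i})
    (hcut : ∀ i ∈ s, ∀ x ∈ U, g i x = γ i →
      (∃ y ∈ K, g i y < γ i) ∧ ∃ y ∈ K, γ i < g i y) :
    U ⊆ K := by
  by_contra hUK'
  have hmeet : (frontier K ∩ U).Nonempty := by
    rw [inter_comm, ← not_disjoint_iff_nonempty_inter]
    intro hdisj
    rcases hUc.subset_or_disjoint_of_disjoint_frontier hdisj with h | h
    · exact hUK' h
    · exact hUK.not_disjoint h
  obtain ⟨i, hi, W, hWo, hWU, ⟨x₀, hx₀fr, hx₀W⟩, hWi⟩ :=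
    exists_isOpen_inter_subset_of_subset_biUnion s
      (fun i _ => isClosed_eq (g i).continuous continuous_const) hU hmeet hfr
  have hx₀ : g i x₀ = γ i := hWi ⟨hx₀fr, hx₀W⟩
  obtain ⟨⟨y, hyK, hy⟩, y', hy'K, hy'⟩ := hcut i hi x₀ (hWU hx₀W) hx₀
  rcases hK.forall_le_or_forall_ge_of_frontier_subset hKc hx₀fr (hWo.mem_nhds hx₀W)
    (fun x hx => (hWi hx).trans hx₀.symm) with h | h
  · linarith [h y' hy'K]
  · linarith [h y hyK]

end ConvexGeometry

namespace TropicalAffine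

variable {d : ℕ}

@[simp] lemma ext_zero (x : Fin d → ℝ) : ext x 0 = 0 := rfl

@[simp] lemma ext_succ (x : Fin d → ℝ) (i : Fin d) : ext x i.succ = x i := rfl

lemma ext_tropComb (l m : ℝ) (x y : Fin d → ℝ) (j : Fin (d + 1)) :
    ext (tropComb l m x y) j = min (l + ext x j) (m + ext y j) - min l m := by
  cases j using Fin.cases <;> simp [tropComb]

def dehom (y : Fin (d + 1) → ℝ) : Fin d → ℝ := fun i => y i.succ - y 0

lemma ext_dehom (y : Fin (d + 1) → ℝ) (j : Fin (d + 1)) : ext (dehom y) j = y j - y 0 := by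
  cases j using Fin.cases <;> simp [dehom]

def extCoord (p : Fin (d + 1)) : (Fin d → ℝ) →L[ℝ] ℝ :=
  Fin.cases (motive := fun _ => (Fin d → ℝ) →L[ℝ] ℝ) 0 ContinuousLinearMap.proj p

def extDiff (p q : Fin (d + 1)) : (Fin d → ℝ) →L[ℝ] ℝ := extCoord p - extCoord q

@[simp] lemma extDiff_apply (p q : Fin (d + 1)) (x : Fin d → ℝ) :
    extDiff p q x = ext x p - ext x q := by
  have (r : Fin (d + 1)) : extCoord r x = ext x r := by cases r using Fin.cases <;> rfl
  simp [extDiff, this]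

lemma extDiff_swap (p q : Fin (d + 1)) (x : Fin d → ℝ) : extDiff q p x = -extDiff p q x := by
  simp

lemma extDiff_add_extDiff (p q r : Fin (d + 1)) (x : Fin d → ℝ) :
    extDiff p q x + extDiff q r x = extDiff p r x := by
  simp

lemma extDiff_dehom_single_pos {p q : Fin (d + 1)} (hpq : p ≠ q) :
    0 < extDiff p q (dehom (Pi.single p 1)) := by
  simp [ext_dehom, Pi.single_apply, hpq.symm]

lemma subset_tconv (V : Set (Fin d → ℝ)) : V ⊆ tconv V :=
  fun _ hx => mem_sInter.2 fun _ hS => hS.2 hx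

lemma tconv_subset {V S : Set (Fin d → ℝ)} (hS : TropConvex S) (hVS : V ⊆ S) :
    tconv V ⊆ S :=
  sInter_subset_of_mem ⟨hS, hVS⟩

lemma tropConvex_tconv (V : Set (Fin d → ℝ)) : TropConvex (tconv V) :=
  fun x hx y hy l m => mem_sInter.2 fun S hS =>
    hS.1 x (mem_sInter.1 hx S hS) y (mem_sInter.1 hy S hS) l m

lemma TropConvex.inf'_mem {T : Set (Fin d → ℝ)} (hT : TropConvex T) {s : Finset (Fin d → ℝ)}
    (hs : s.Nonempty) (hsT : ↑s ⊆ T) (l : (Fin d → ℝ) → ℝ) :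
    (fun i => s.inf' hs (fun v => l v + v i) - s.inf' hs l) ∈ T := by
  induction hs using Finset.Nonempty.cons_induction with
  | singleton a => simpa using hsT (Finset.mem_singleton_self a)
  | cons a s ha hs ih =>
    have hy := ih ((Finset.coe_subset.2 (Finset.subset_cons ha)).trans hsT)
    convert hT a (hsT (Finset.mem_cons_self a s)) _ hy (l a) (s.inf' hs l) using 1
    funext i
    simp only [Finset.inf'_cons hs, tropComb]
    ring_nf

theorem mem_tconv_iff {V : Finset (Fin d → ℝ)} {x : Fin d → ℝ} :
    x ∈ tconv ↑V ↔ ∀ i, ∃ v ∈ V, ∀ j, extDiff j i x ≤ extDiff j i v := by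
  constructor
  · refine fun hx => tconv_subset
      (S := {x | ∀ i, ∃ v ∈ V, ∀ j, extDiff j i x ≤ extDiff j i v}) ?_
      (fun v hv i => ⟨v, hv, fun j => le_rfl⟩) hx
    intro x hx y hy l m i
    simp only [extDiff_apply, ext_tropComb]
    rcases le_total (l + ext x i) (m + ext y i) with h | h
    · obtain ⟨v, hv, hxv⟩ := hx i
      refine ⟨v, hv, fun j => ?_⟩
      have := hxv j
      simp only [extDiff_apply] at this
      rw [min_eq_left h]
      linarith [min_le_left (l + ext x j) (m + ext y j)]
    · obtain ⟨v, hv, hyv⟩ := hy i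
      refine ⟨v, hv, fun j => ?_⟩
      have := hyv j
      simp only [extDiff_apply] at this
      rw [min_eq_right h]
      linarith [min_le_right (l + ext x j) (m + ext y j)]
  · intro hx
    have hV : V.Nonempty := let ⟨v, hv, _⟩ := hx 0; ⟨v, hv⟩
    -- `l v` is the least `λ` with `ext x ≤ λ + ext v`; these coefficients realize `x`.
    let l : (Fin d → ℝ) → ℝ := fun v => Finset.univ.sup' Finset.univ_nonempty
      (fun j => ext x j - ext v j)
    have hl (i : Fin (d + 1)) : V.inf' hV (fun v => l v + ext v i) = ext x i := by
      refine le_antisymm ?_ (Finset.le_inf' _ _ fun v _ => ?_)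
      · obtain ⟨v, hv, hxv⟩ := hx i
        refine (Finset.inf'_le _ hv).trans ?_
        have : l v ≤ ext x i - ext v i := Finset.sup'_le _ _ fun j _ => by
          have := hxv j
          simp only [extDiff_apply] at this
          linarith
        linarith
      · have : ext x i - ext v i ≤ l v :=
          Finset.le_sup' (fun j => ext x j - ext v j) (Finset.mem_univ i)
        linarith
    convert TropConvex.inf'_mem (tropConvex_tconv _) hV (subset_tconv _) l using 1
    funext i
    have h0 := hl 0
    have hi := hl i.succ
    simp only [ext_zero, add_zero, ext_succ] at h0 hi
    rw [hi, h0, sub_zero]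

lemma isClosed_tconv (V : Finset (Fin d → ℝ)) : IsClosed (tconv (V : Set (Fin d → ℝ))) := by
  have : tconv (V : Set (Fin d → ℝ)) =
      ⋂ i, ⋃ v ∈ V, ⋂ j, {x | extDiff j i x ≤ extDiff j i v} := by
    ext x
    simp only [mem_tconv_iff, mem_iInter, mem_iUnion, mem_ofPred_eq, exists_prop]
  rw [this]
  exact isClosed_iInter fun i => isClosed_biUnion_finset fun v _ =>
    isClosed_iInter fun j => isClosed_le (extDiff j i).continuous continuous_const

lemma isBounded_tconv (V : Finset (Fin d → ℝ)) :
    Bornology.IsBounded (tconv (V : Set (Fin d → ℝ))) := by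
  set R := ∑ v ∈ V, ‖v‖
  have hR {v} (hv : v ∈ V) (k : Fin d) : |v k| ≤ R :=
    (norm_le_pi_norm v k).trans (Finset.single_le_sum (fun w _ => norm_nonneg w) hv)
  refine (Metric.isBounded_closedBall (x := 0) (r := R)).subset fun x hx => ?_
  rw [mem_tconv_iff] at hx
  rw [Metric.mem_closedBall, dist_zero_right,
    pi_norm_le_iff_of_nonneg (Finset.sum_nonneg fun w _ => norm_nonneg w)]
  intro k
  obtain ⟨v, hv, hxv⟩ := hx 0
  obtain ⟨w, hw, hxw⟩ := hx k.succ
  have hup := hxv k.succ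
  have hlo := hxw 0
  simp only [extDiff_apply, ext_zero, ext_succ] at hup hlo
  rw [Real.norm_eq_abs, abs_le]
  constructor <;> linarith [abs_le.1 (hR hv k), abs_le.1 (hR hw k)]

lemma isCompact_tconv (V : Finset (Fin d → ℝ)) : IsCompact (tconv (V : Set (Fin d → ℝ))) :=
  Metric.isCompact_of_isClosed_isBounded (isClosed_tconv V) (isBounded_tconv V)

theorem frontier_tconv_subset_biUnion (V : Finset (Fin d → ℝ)) :
    frontier (tconv (V : Set (Fin d → ℝ))) ⊆
      ⋃ i ∈ V ×ˢ Finset.univ.offDiag,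
        {x | extDiff i.2.1 i.2.2 x = extDiff i.2.1 i.2.2 i.1} := by
  intro x hx
  by_contra hwall
  simp only [mem_iUnion, Finset.mem_product, Finset.mem_offDiag, Finset.mem_univ, true_and,
    mem_ofPred_eq, exists_prop, not_exists, not_and, Prod.forall] at hwall
  have hxP := frontier_subset_closure hx
  rw [(isClosed_tconv V).closure_eq, mem_tconv_iff] at hxP
  choose κ hκV hκ using hxP
  let O := ⋂ i, ⋂ j ∈ Finset.univ.erase i, {y | extDiff j i y < extDiff j i (κ i)}
  have hO : IsOpen O := isOpen_iInter_of_finite fun i => isOpen_biInter_finset fun j _ =>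
    isOpen_lt (extDiff j i).continuous continuous_const
  have hxO : x ∈ O := by
    simp only [O, mem_iInter, Finset.mem_erase, mem_ofPred_eq]
    exact fun i j hji => (hκ i j).lt_of_ne fun h => hwall (κ i) j i ⟨hκV i, hji.1⟩ h
  have hOP : O ⊆ tconv ↑V := fun y hy => by
    simp only [O, mem_iInter, Finset.mem_erase, mem_ofPred_eq] at hy
    refine mem_tconv_iff.2 fun i => ⟨κ i, hκV i, fun j => ?_⟩
    rcases eq_or_ne j i with rfl | hji
    · simp
    · exact (hy i j ⟨hji, Finset.mem_univ j⟩).le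
  exact hx.2 (mem_interior.2 ⟨O, hOP, hO, hxO⟩)

theorem tconv_subset_biUnion_of_card_le {V : Finset (Fin d → ℝ)} (hV : V.card ≤ d) :
    tconv (V : Set (Fin d → ℝ)) ⊆
      ⋃ i ∈ V ×ˢ Finset.univ.offDiag,
        {x | extDiff i.2.1 i.2.2 x = extDiff i.2.1 i.2.2 i.1} := by
  intro x hx
  rw [mem_tconv_iff] at hx
  choose κ hκV hκ using hx
  obtain ⟨p, -, q, -, hpq, hκpq⟩ := Finset.exists_ne_map_eq_of_card_lt_of_maps_to
    (s := Finset.univ) (t := V) (by simpa using Nat.lt_succ_of_le hV) (fun i _ => hκV i)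
  refine mem_biUnion (x := (κ p, p, q)) (by simp [hκV p, hpq]) ?_
  have h₁ := hκ q p
  have h₂ := hκ p q
  rw [← hκpq] at h₁
  rw [extDiff_swap p q, extDiff_swap p q] at h₂
  exact le_antisymm h₁ (neg_le_neg_iff.1 h₂)

theorem interior_tconv_eq_empty_of_card_le {V : Finset (Fin d → ℝ)} (hV : V.card ≤ d) :
    interior (tconv (V : Set (Fin d → ℝ))) = ∅ := by
  by_contra hne
  obtain ⟨⟨v, p, q⟩, hi, W, hWo, -, ⟨x, -, hxW⟩, hWH⟩ :=
    exists_isOpen_inter_subset_of_subset_biUnion (F := univ) (V ×ˢ Finset.univ.offDiag)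
      (fun i _ => isClosed_eq (extDiff _ _).continuous continuous_const) isOpen_interior
      (by simpa [nonempty_iff_ne_empty] using hne)
      (fun x hx => tconv_subset_biUnion_of_card_le hV (interior_subset hx.2))
  have hpq : p ≠ q := (Finset.mem_offDiag.1 (Finset.mem_product.1 hi).2).2.2
  have hxH : x ∈ interior {y | extDiff p q y ≤ extDiff p q v} :=
    mem_interior.2 ⟨W, fun y hy => (hWH ⟨trivial, hy⟩).le, hWo, hxW⟩
  exact (lt_of_mem_interior_setOf_le (extDiff_dehom_single_pos hpq) hxH).ne (hWH ⟨trivial, hxW⟩)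

def digraphPolyhedron (c : Fin (d + 1) → Fin (d + 1) → ℝ) : Set (Fin d → ℝ) :=
  {x | ∀ p q, extDiff p q x ≤ c p q}

section DigraphPolyhedron

variable {c : Fin (d + 1) → Fin (d + 1) → ℝ}

lemma convex_digraphPolyhedron (c : Fin (d + 1) → Fin (d + 1) → ℝ) :
    Convex ℝ (digraphPolyhedron c) := by
  have : digraphPolyhedron c = ⋂ p, ⋂ q, {x | extDiff p q x ≤ c p q} := by
    ext
    simp [digraphPolyhedron]
  rw [this]
  exact convex_iInter fun p => convex_iInter fun q =>
    convex_halfSpace_le (extDiff p q).isLinear _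

lemma extDiff_lt_of_mem_interior_digraphPolyhedron {x : Fin d → ℝ}
    (hx : x ∈ interior (digraphPolyhedron c)) {p q : Fin (d + 1)} (hpq : p ≠ q) :
    extDiff p q x < c p q :=
  lt_of_mem_interior_setOf_le (extDiff_dehom_single_pos hpq)
    (interior_mono (fun y (hy : y ∈ digraphPolyhedron c) => hy p q) hx)

def column (c : Fin (d + 1) → Fin (d + 1) → ℝ) (q : Fin (d + 1)) : Fin d → ℝ :=
  dehom fun j => c j q

lemma column_mem_digraphPolyhedron (htri : ∀ p q r, c p r ≤ c p q + c q r) (q : Fin (d + 1)) :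
    column c q ∈ digraphPolyhedron c := fun p r => by
  simp only [column, extDiff_apply, ext_dehom]
  linarith [htri p r q]

lemma digraphPolyhedron_subset_tconv_column (hdiag : ∀ p, c p p = 0) :
    digraphPolyhedron c ⊆ tconv (range (column c)) := by
  intro x hx
  have : range (column c) = ↑(Finset.univ.image (column c)) := by simp
  rw [this, mem_tconv_iff]
  refine fun i => ⟨column c i, Finset.mem_image_of_mem _ (Finset.mem_univ i), fun j => ?_⟩
  simpa [column, ext_dehom, hdiag] using hx j i

variable {P : Set (Fin d → ℝ)}

lemma subset_digraphPolyhedron_of_isGreatest (hc : ∀ p q, IsGreatest (extDiff p q '' P) (c p q)) :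
    P ⊆ digraphPolyhedron c :=
  fun _ hx p q => (hc p q).2 (mem_image_of_mem _ hx)

lemma diag_eq_zero_of_isGreatest (hc : ∀ p q, IsGreatest (extDiff p q '' P) (c p q))
    (p : Fin (d + 1)) : c p p = 0 := by
  obtain ⟨x, -, hx⟩ := (hc p p).1
  simpa using hx.symm

lemma triangle_of_isGreatest (hc : ∀ p q, IsGreatest (extDiff p q '' P) (c p q))
    (p q r : Fin (d + 1)) : c p r ≤ c p q + c q r := by
  obtain ⟨x, hxP, hx⟩ := (hc p r).1
  rw [← hx, ← extDiff_add_extDiff p q r]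
  exact add_le_add ((hc p q).2 ⟨x, hxP, rfl⟩) ((hc q r).2 ⟨x, hxP, rfl⟩)

end DigraphPolyhedron

theorem digraphPolyhedron_subset_tconv {V : Finset (Fin d → ℝ)}
    (hconv : Convex ℝ (tconv (V : Set (Fin d → ℝ))))
    (hint : (interior (tconv (V : Set (Fin d → ℝ)))).Nonempty)
    {c : Fin (d + 1) → Fin (d + 1) → ℝ}
    (hc : ∀ p q, IsGreatest (extDiff p q '' tconv ↑V) (c p q)) :
    digraphPolyhedron c ⊆ tconv ↑V := by
  have hPQ := subset_digraphPolyhedron_of_isGreatest hc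
  have hQ := convex_digraphPolyhedron c
  have hintQ : interior (digraphPolyhedron c) ⊆ tconv ↑V := by
    refine hconv.subset_of_frontier_inter_subset_biUnion (isClosed_tconv V) isOpen_interior
      hQ.interior.isPreconnected ?_ (inter_subset_left.trans (frontier_tconv_subset_biUnion V)) ?_
    · obtain ⟨x, hx⟩ := hint
      exact ⟨x, interior_mono hPQ hx, interior_subset hx⟩
    · rintro ⟨v, p, q⟩ hi x hx hxv
      have hpq : p ≠ q := (Finset.mem_offDiag.1 (Finset.mem_product.1 hi).2).2.2
      obtain ⟨y, hyP, hy⟩ := (hc p q).1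
      obtain ⟨y', hy'P, hy'⟩ := (hc q p).1
      have h₁ := extDiff_lt_of_mem_interior_digraphPolyhedron hx hpq
      have h₂ := extDiff_lt_of_mem_interior_digraphPolyhedron hx hpq.symm
      rw [extDiff_swap] at h₂ hy'
      refine ⟨⟨y', hy'P, ?_⟩, y, hyP, ?_⟩ <;> simp only at hxv ⊢ <;> linarith
  calc digraphPolyhedron c ⊆ closure (digraphPolyhedron c) := subset_closure
    _ = closure (interior (digraphPolyhedron c)) :=
      (hQ.closure_interior_eq_closure_of_nonempty_interior (hint.mono (interior_mono hPQ))).symm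
    _ ⊆ tconv ↑V := closure_minimal hintQ (isClosed_tconv V)

theorem exists_tconv_range_eq_of_convex {V : Finset (Fin d → ℝ)}
    (hconv : Convex ℝ (tconv (V : Set (Fin d → ℝ))))
    (hint : (interior (tconv (V : Set (Fin d → ℝ)))).Nonempty) :
    ∃ v : Fin (d + 1) → Fin d → ℝ, tconv ↑V = tconv (range v) := by
  have hc (p q : Fin (d + 1)) : ∃ c, IsGreatest (extDiff p q '' tconv ↑V) c :=
    ((isCompact_tconv V).image (extDiff p q).continuous).exists_isGreatest
      ((hint.mono interior_subset).image _)
  choose c hc using hc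
  refine ⟨column c, subset_antisymm ?_ (tconv_subset (tropConvex_tconv _) ?_)⟩
  · exact (subset_digraphPolyhedron_of_isGreatest hc).trans
      (digraphPolyhedron_subset_tconv_column (diag_eq_zero_of_isGreatest hc))
  · rintro _ ⟨q, rfl⟩
    exact digraphPolyhedron_subset_tconv hconv hint hc
      (column_mem_digraphPolyhedron (triangle_of_isGreatest hc) q)

end TropicalAffine

/-- A polytrope `P ⊆ ℝ^d` of affine dimension `d` is a tropical simplex:
it is the tropical convex hull of `d+1` points, and not the tropical convex hull
of any set of at most `d` points. -/
theorem polytrope_is_tropical_simplex {d : ℕ} (P : Set (Fin d → ℝ))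
    (hP : IsPolytrope P) (hdim : affineSpan ℝ P = ⊤) :
    (∃ v : Fin (d + 1) → Fin d → ℝ, P = tconv (Set.range v)) ∧
      ∀ W : Set (Fin d → ℝ), W.Finite → W.ncard ≤ d → P ≠ tconv W := by
  obtain ⟨⟨V, rfl⟩, hconv⟩ := hP
  have hint := hconv.interior_nonempty_iff_affineSpan_eq_top.2 hdim
  refine ⟨TropicalAffine.exists_tconv_range_eq_of_convex hconv hint,
    fun W hW hcard hPW => hint.ne_empty ?_⟩
  rw [hPW, ← hW.coe_toFinset]
  exact TropicalAffine.interior_tconv_eq_empty_of_card_le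
    (by rwa [← ncard_eq_toFinset_card W hW])
end
end

section
/- Let d ≥ 1 and let c : {0,…,d} × {0,…,d} → ℝ satisfy c_{ii} = 0 for all i and the triangle inequality c_{ik} ≤ c_{ij} + c_{jk} for all i, j, k ∈ {0,…,d}. Let P := {x ∈ ℝ^d : x_i − x_j ≤ c_{ij} for all i ≠ j in {0,…,d}} (with the convention x_0 := 0), and for each i ∈ {0,…,d} define v_i ∈ ℝ^d by (v_i)_k := c_{ki} − c_{0i} for k = 1,…,d. Then P = tconv{v_0, v_1, …, v_d}. -/
open Set

noncomputable section

/-!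
The polyhedron `P` is tropically convex, because each constraint `x_i - x_j ≤ c_{ij}` survives
taking a coordinatewise minimum in homogeneous coordinates, and it contains the points `v_t` by the
triangle inequality; hence `tconv V ⊆ P`. Conversely, for `x ∈ P` the weights
`λ_t = x_t + c_{0t}` write `x` as the tropical combination `min_t (λ_t + v_t)`: in coordinate `k`
this is `min_t (x_t + c_{kt})`, which equals `x_k` since `c_{kk} = 0` and `x_k ≤ x_t + c_{kt}`.
-/

namespace TropConvex

variable {d : ℕ}

@[simp]
lemma ext_zero (x : Fin d → ℝ) : ext x 0 = 0 := rfl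

@[simp]
lemma ext_succ (x : Fin d → ℝ) (k : Fin d) : ext x k.succ = x k := rfl

lemma ext_tropComb (l m : ℝ) (x y : Fin d → ℝ) (i : Fin (d + 1)) :
    ext (tropComb l m x y) i = min (l + ext x i) (m + ext y i) - min l m := by
  cases i using Fin.cases with
  | zero => simp
  | succ k => rfl

lemma tconv_subset {V S : Set (Fin d → ℝ)} (hS : TropConvex S) (hVS : V ⊆ S) : tconv V ⊆ S :=
  sInter_subset_of_mem ⟨hS, hVS⟩

lemma inf'_add_sub_inf'_mem {S : Set (Fin d → ℝ)} (hS : TropConvex S) {ι : Type*}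
    {f : ι → Fin d → ℝ} (lam : ι → ℝ) {s : Finset ι} (hs : s.Nonempty) (hf : ∀ i ∈ s, f i ∈ S) :
    (fun k => s.inf' hs (fun i => lam i + f i k) - s.inf' hs lam) ∈ S := by
  induction hs using Finset.Nonempty.cons_induction with
  | singleton a => simpa using hf a (Finset.mem_singleton_self a)
  | cons a s ha hs ih =>
    have hrest := ih fun i hi => hf i (Finset.mem_cons_of_mem hi)
    convert hS _ (hf a (Finset.mem_cons_self a s)) _ hrest (lam a) (s.inf' hs lam) using 1
    funext k
    simp only [tropComb, Finset.inf'_cons hs, add_sub_cancel]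

end TropConvex

open TropConvex

section WeightedDigraphPolyhedron

variable {d : ℕ} (c : Fin (d + 1) → Fin (d + 1) → ℝ)

def weightedDigraphPolyhedron : Set (Fin d → ℝ) :=
  {x | ∀ i j : Fin (d + 1), i ≠ j → ext x i - ext x j ≤ c i j}

def vertex (t : Fin (d + 1)) : Fin d → ℝ := fun k => c k.succ t - c 0 t

lemma ext_vertex (t i : Fin (d + 1)) : ext (vertex c t) i = c i t - c 0 t := by
  cases i using Fin.cases with
  | zero => simp
  | succ k => rfl

lemma tropConvex_weightedDigraphPolyhedron : TropConvex (weightedDigraphPolyhedron c) := by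
  intro x hx y hy l m i j hij
  rw [ext_tropComb, ext_tropComb]
  have hxij := hx i j hij
  have hyij := hy i j hij
  rcases min_cases (l + ext x j) (m + ext y j) with ⟨hmin, -⟩ | ⟨hmin, -⟩ <;> rw [hmin]
  · linarith [min_le_left (l + ext x i) (m + ext y i)]
  · linarith [min_le_right (l + ext x i) (m + ext y i)]

variable {c}

lemma vertex_mem_weightedDigraphPolyhedron (htri : ∀ i j k, c i k ≤ c i j + c j k)
    (t : Fin (d + 1)) : vertex c t ∈ weightedDigraphPolyhedron c := by
  intro i j _
  rw [ext_vertex, ext_vertex]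
  linarith [htri i j t]

lemma inf'_ext_add_eq (hdiag : ∀ i, c i i = 0) {x : Fin d → ℝ}
    (hx : x ∈ weightedDigraphPolyhedron c) (j : Fin (d + 1)) :
    Finset.univ.inf' Finset.univ_nonempty (fun i => ext x i + c j i) = ext x j := by
  refine le_antisymm ?_ (Finset.le_inf' _ _ fun i _ => ?_)
  · exact (Finset.inf'_le _ (Finset.mem_univ j)).trans_eq (by simp [hdiag])
  · by_cases hji : j = i
    · simp [hji, hdiag]
    · linarith [hx j i hji]

lemma eq_tropComb_vertex_of_mem (hdiag : ∀ i, c i i = 0) {x : Fin d → ℝ}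
    (hx : x ∈ weightedDigraphPolyhedron c) :
    x = fun k => Finset.univ.inf' Finset.univ_nonempty (fun t => (ext x t + c 0 t) + vertex c t k)
      - Finset.univ.inf' Finset.univ_nonempty (fun t => ext x t + c 0 t) := by
  funext k
  have hcoord : (fun t => (ext x t + c 0 t) + vertex c t k) = fun t => ext x t + c k.succ t := by
    funext t
    simp only [vertex]
    ring
  rw [hcoord, inf'_ext_add_eq hdiag hx, inf'_ext_add_eq hdiag hx, ext_succ, ext_zero, sub_zero]

end WeightedDigraphPolyhedron

theorem polytrope_tropical_vertices_general {d : ℕ}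
    (c : Fin (d + 1) → Fin (d + 1) → ℝ)
    (hdiag : ∀ i, c i i = 0)
    (htri : ∀ i j k, c i k ≤ c i j + c j k) :
    {x : Fin d → ℝ | ∀ i j : Fin (d + 1), i ≠ j → ext x i - ext x j ≤ c i j} =
      tconv (Set.range fun i : Fin (d + 1) => fun k : Fin d => c k.succ i - c 0 i) := by
  change weightedDigraphPolyhedron c = tconv (range (vertex c))
  refine Subset.antisymm (fun x hx S ⟨hS, hVS⟩ => ?_) ?_
  · rw [eq_tropComb_vertex_of_mem hdiag hx]
    exact hS.inf'_add_sub_inf'_mem _ Finset.univ_nonempty fun t _ => hVS (mem_range_self t)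
  · refine tconv_subset (tropConvex_weightedDigraphPolyhedron c) ?_
    rintro _ ⟨t, rfl⟩
    exact vertex_mem_weightedDigraphPolyhedron htri t

/-- If `c` has zero diagonal and satisfies the triangle inequality, then the
polytope `P = {x : x_i - x_j ≤ c i j}` (with `x_0 := 0`) is the tropical convex hull of the
points `v_i` with `(v_i)_k = c k i - c 0 i` for `k = 1, …, d`. -/
theorem polytrope_tropical_vertices {d : ℕ} (hd : 1 ≤ d)
    (c : Fin (d + 1) → Fin (d + 1) → ℝ)
    (hdiag : ∀ i, c i i = 0)
    (htri : ∀ i j k, c i k ≤ c i j + c j k) :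
    {x : Fin d → ℝ | ∀ i j : Fin (d + 1), i ≠ j → ext x i - ext x j ≤ c i j} =
      tconv (Set.range fun i : Fin (d + 1) => fun k : Fin d => c k.succ i - c 0 i) :=
  polytrope_tropical_vertices_general c hdiag htri
end
end

section
/- Every d-polytrope P ⊆ ℝ^d has at most d(d+1) ordinary facets; that is, the number of (d−1)-dimensional faces of P, regarded as an ordinary convex polytope, is at most d(d+1). -/
open Set

noncomputable section

/-- A facet of `P ⊆ ℝ^d`: a convex extreme subset of affine dimension `d - 1`. -/
def IsFacet {d : ℕ} (P F : Set (Fin d → ℝ)) : Prop :=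
  F.Nonempty ∧ Convex ℝ F ∧ IsExtreme ℝ P F ∧ Module.finrank ℝ (vectorSpan ℝ F) + 1 = d

/-!
A facet `F` of the full-dimensional convex set `P = tconv V` is the set of maximizers over `P` of
a linear functional, which in homogeneous coordinates reads `y ↦ A ⬝ᵥ ext y` with `∑ k, A k = 0`.
Tropical convexity of `P`, applied to points `x ± t • w` near a relative interior point `x` of `F`,
shows that `A` has exactly one negative coefficient `A q`. Finiteness of `V` shows that it has
exactly one positive coefficient `A p`: on the maximizing face, every value of `y_p - y_q` is
already taken at a generator. So `F` is the face of `P` maximizing `y_p - y_q` for a pair `p ≠ q`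
of homogeneous indices; it is determined by the pair, which leaves at most `(d + 1) d` facets.
-/

open Matrix Filter Topology

section ConvexGeometry

variable {E : Type*} [NormedAddCommGroup E] [NormedSpace ℝ E] {C F P : Set E} {x : E}

theorem eventually_add_smul_mem_of_mem_intrinsicInterior (hx : x ∈ intrinsicInterior ℝ F)
    {w : E} (hw : w ∈ vectorSpan ℝ F) : ∀ᶠ t in 𝓝 (0 : ℝ), x + t • w ∈ F := by
  obtain ⟨y, hy, rfl⟩ := hx
  have hmem (t : ℝ) : (y : E) + t • w ∈ affineSpan ℝ F := by
    rw [add_comm, ← vadd_eq_add]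
    exact AffineSubspace.vadd_mem_of_mem_direction
      (by rw [direction_affineSpan]; exact Submodule.smul_mem _ t hw) y.2
  let γ : ℝ → affineSpan ℝ F := fun t => ⟨y + t • w, hmem t⟩
  have hγ : Tendsto γ (𝓝 0) (𝓝 y) := by
    have : Continuous γ := by fun_prop
    simpa [γ] using this.tendsto 0
  exact hγ.eventually (mem_interior_iff_mem_nhds.1 hy)

theorem IsExtreme.subset_of_eventually_add_smul_sub_mem (hext : IsExtreme ℝ C F) (hx : x ∈ F)
    (h : ∀ y ∈ C, ∀ᶠ t in 𝓝 (0 : ℝ), x + t • (x - y) ∈ C) : C ⊆ F := by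
  intro y hy
  obtain ⟨t, hxt, ht⟩ :=
    (((h y hy).filter_mono nhdsWithin_le_nhds).and (self_mem_nhdsWithin (s := Ioi 0))).exists
  refine hext.left_mem_of_mem_openSegment hy hxt hx
    ⟨t / (1 + t), 1 / (1 + t), by positivity, by positivity, by field_simp; ring, ?_⟩
  match_scalars <;> field_simp; ring

theorem IsExtreme.subset_of_mem_intrinsicInterior (hext : IsExtreme ℝ C F) (hx : x ∈ F)
    (hxC : x ∈ intrinsicInterior ℝ C) : C ⊆ F :=
  hext.subset_of_eventually_add_smul_sub_mem hx fun _ hy =>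
    eventually_add_smul_mem_of_mem_intrinsicInterior hxC
      (vsub_mem_vectorSpan ℝ (intrinsicInterior_subset hxC) hy)

theorem vectorSpan_le_ker_of_isMaxOn (hx : x ∈ intrinsicInterior ℝ F) {f : E →ₗ[ℝ] ℝ}
    (hmax : IsMaxOn f F x) : vectorSpan ℝ F ≤ LinearMap.ker f := by
  intro w hw
  have hloc : IsLocalMax (fun t : ℝ => t * f w) 0 :=
    (eventually_add_smul_mem_of_mem_intrinsicInterior hx hw).mono fun t ht => by
      simpa using hmax ht
  exact hloc.hasDerivAt_eq_zero (hasDerivAt_mul_const (f w))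

theorem vectorSpan_eq_ker_of_isMaxOn [FiniteDimensional ℝ E] (hx : x ∈ intrinsicInterior ℝ F)
    {f : E →ₗ[ℝ] ℝ} (hf : f ≠ 0) (hmax : IsMaxOn f F x)
    (hrank : Module.finrank ℝ (vectorSpan ℝ F) + 1 = Module.finrank ℝ E) :
    vectorSpan ℝ F = LinearMap.ker f :=
  Submodule.eq_of_le_of_finrank_eq (vectorSpan_le_ker_of_isMaxOn hx hmax)
    (by have := Module.Dual.finrank_ker_add_one_of_ne_zero hf; omega)

theorem Convex.exists_ne_zero_isMaxOn_of_notMem_interior (hP : Convex ℝ P)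
    (hint : (interior P).Nonempty) (hx : x ∉ interior P) :
    ∃ f : E →ₗ[ℝ] ℝ, f ≠ 0 ∧ IsMaxOn f P x := by
  obtain ⟨f, u, hf, hPu, hux⟩ := geometric_hahn_banach_of_nonempty_interior hP
    (convex_singleton x) (disjoint_singleton_right.2 hx) hint (singleton_nonempty x)
  refine ⟨f, fun h => hf (ContinuousLinearMap.coe_injective h), fun y hy => ?_⟩
  exact (hPu y hy).trans (hux x rfl)

theorem IsExtreme.exists_isMaxOn_of_finrank_add_one [FiniteDimensional ℝ E] (hPc : Convex ℝ P)
    (hP : affineSpan ℝ P = ⊤) (hext : IsExtreme ℝ P F) (hFc : Convex ℝ F) (hFne : F.Nonempty)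
    (hrank : Module.finrank ℝ (vectorSpan ℝ F) + 1 = Module.finrank ℝ E) :
    ∃ x ∈ intrinsicInterior ℝ F, ∃ f : E →ₗ[ℝ] ℝ, f ≠ 0 ∧ IsMaxOn f P x := by
  obtain ⟨x, hx⟩ := hFne.intrinsicInterior hFc
  have hxF := intrinsicInterior_subset hx
  have hxP : x ∉ interior P := fun hxP => by
    have hPF := hext.subset_of_mem_intrinsicInterior hxF (interior_subset_intrinsicInterior hxP)
    have hF : vectorSpan ℝ F = ⊤ := by
      rw [eq_top_iff, ← AffineSubspace.direction_top ℝ E E, ← hP, direction_affineSpan]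
      exact vectorSpan_mono ℝ hPF
    rw [hF, finrank_top] at hrank
    omega
  exact ⟨x, hx, hPc.exists_ne_zero_isMaxOn_of_notMem_interior
    (hPc.interior_nonempty_iff_affineSpan_eq_top.2 hP) hxP⟩

theorem IsExtreme.eq_setOf_isMaxOn [FiniteDimensional ℝ E] (hext : IsExtreme ℝ P F)
    (hrank : Module.finrank ℝ (vectorSpan ℝ F) + 1 = Module.finrank ℝ E)
    (hx : x ∈ intrinsicInterior ℝ F) {f : E →ₗ[ℝ] ℝ} (hf : f ≠ 0) (hmax : IsMaxOn f P x) :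
    F = {y ∈ P | IsMaxOn f P y} := by
  have hxF := intrinsicInterior_subset hx
  have hspan := vectorSpan_eq_ker_of_isMaxOn hx hf (hmax.on_subset hext.subset) hrank
  have hFM : F ⊆ {y ∈ P | IsMaxOn f P y} := fun y hy => by
    have hfy : f (y - x) = 0 := by
      rw [← LinearMap.mem_ker, ← hspan]
      exact vsub_mem_vectorSpan ℝ hy hxF
    rw [map_sub, sub_eq_zero] at hfy
    exact ⟨hext.subset hy, fun z hz => hfy ▸ hmax hz⟩
  refine hFM.antisymm ((hext.mono (fun y hy => hy.1) hFM).subset_of_eventually_add_smul_sub_mem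
    hxF fun y hy => ?_)
  have hxy : x - y ∈ vectorSpan ℝ F := by
    rw [hspan, LinearMap.mem_ker, map_sub, sub_eq_zero]
    exact le_antisymm (hy.2 (hext.subset hxF)) (hmax hy.1)
  exact (eventually_add_smul_mem_of_mem_intrinsicInterior hx hxy).mono fun t ht => hFM ht

end ConvexGeometry

section HomogeneousCoordinates

variable {d : ℕ}

@[simp] theorem ext_zero (x : Fin d → ℝ) : ext x 0 = 0 := rfl

@[simp] theorem ext_succ (x : Fin d → ℝ) (i : Fin d) : ext x i.succ = x i := rfl

theorem ext_add_smul (x w : Fin d → ℝ) (t : ℝ) : ext (x + t • w) = ext x + t • ext w := by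
  funext k
  cases k using Fin.cases <;> simp

theorem ext_tropComb (l m : ℝ) (x y : Fin d → ℝ) (k : Fin (d + 1)) :
    ext (tropComb l m x y) k = min (l + ext x k) (m + ext y k) - min l m := by
  cases k using Fin.cases <;> simp [tropComb]

theorem tropComb_comm (l m : ℝ) (x y : Fin d → ℝ) : tropComb l m x y = tropComb m l y x := by
  funext i
  simp only [tropComb, min_comm l m, min_comm (l + x i)]

def dehom (v : Fin (d + 1) → ℝ) : Fin d → ℝ := fun i => v i.succ - v 0

theorem ext_dehom (v : Fin (d + 1) → ℝ) : ext (dehom v) = v - v 0 • 1 := by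
  funext k
  cases k using Fin.cases <;> simp [dehom]

theorem exists_dotProduct_ext_eq (f : (Fin d → ℝ) →ₗ[ℝ] ℝ) :
    ∃ A : Fin (d + 1) → ℝ, A ⬝ᵥ 1 = 0 ∧ ∀ y, f y = A ⬝ᵥ ext y := by
  classical
  let a : Fin d → ℝ := fun i => f fun j => if i = j then 1 else 0
  refine ⟨Fin.cons (-∑ i, a i) a, ?_, fun y => ?_⟩
  · simp [dotProduct_one, Fin.sum_univ_succ]
  · simp [dotProduct, Fin.sum_univ_succ, f.pi_apply_eq_sum_univ y, a, mul_comm]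

end HomogeneousCoordinates

section TropicalHull

variable {d : ℕ}

theorem tropConvex_tconv (V : Set (Fin d → ℝ)) : TropConvex (tconv V) :=
  fun _ hx _ hy l m _ hS => hS.1 _ (hx _ hS) _ (hy _ hS) l m

theorem subset_tconv (V : Set (Fin d → ℝ)) : V ⊆ tconv V :=
  fun _ hv _ hS => hS.2 hv

theorem tconv_min {V S : Set (Fin d → ℝ)} (hVS : V ⊆ S) (hS : TropConvex S) : tconv V ⊆ S :=
  sInter_subset_of_mem ⟨hS, hVS⟩

end TropicalHull

section Signs

variable {ι : Type*} [Fintype ι] {A : ι → ℝ} {p q : ι}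

theorem nonneg_of_ne_of_forall_dotProduct_abs_nonneg [DecidableEq ι]
    (hA : ∀ v, A ⬝ᵥ v = 0 → 0 ≤ A ⬝ᵥ |v|) (hq : A q < 0) {k : ι} (hk : k ≠ q) : 0 ≤ A k := by
  by_contra! hAk
  set v : ι → ℝ := Pi.single k (A q) - Pi.single q (A k)
  have hv : A ⬝ᵥ v = 0 := by
    simp only [v, dotProduct_sub, dotProduct_single]
    ring
  have habs : |v| = Pi.single k (-A q) + Pi.single q (-A k) := by
    funext i
    rcases eq_or_ne i k with rfl | hik
    · simp [v, hk, abs_of_neg hq]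
    · rcases eq_or_ne i q with rfl | hiq
      · simp [v, hik, abs_of_neg hAk]
      · simp [v, hik, hiq]
  have := hA v hv
  rw [habs, dotProduct_add, dotProduct_single, dotProduct_single] at this
  nlinarith [mul_pos_of_neg_of_neg hq hAk]

theorem dotProduct_eq_mul_sub_of_nonneg_of_nonpos (hA : A ⬝ᵥ 1 = 0) (hpq : p ≠ q)
    (hq : ∀ k ≠ q, 0 ≤ A k) (hp : ∀ k ≠ p, A k ≤ 0) (v : ι → ℝ) :
    A ⬝ᵥ v = A p * (v p - v q) := by
  have hzero (k : ι) (hk : k ≠ p ∧ k ≠ q) : A k = 0 := le_antisymm (hp k hk.1) (hq k hk.2)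
  have hsum : A p + A q = 0 := by
    rw [← Fintype.sum_eq_add p q hpq hzero, ← dotProduct_one, hA]
  rw [dotProduct, Fintype.sum_eq_add p q hpq fun k hk => by rw [hzero k hk, zero_mul]]
  linear_combination v q * hsum

theorem min_add_sub_eq_sub_abs (a b : ℝ) : min (a + b) (a - b) = a - |b| := by
  rcases le_total 0 b with h | h
  · rw [abs_of_nonneg h, min_eq_right (by linarith)]
  · rw [abs_of_nonpos h, min_eq_left (by linarith), sub_neg_eq_add]

end Signs

section Normals

variable {d : ℕ} {A : Fin (d + 1) → ℝ} {p q : Fin (d + 1)} {x : Fin d → ℝ}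

theorem dotProduct_ext_tropComb_le (hA : A ⬝ᵥ 1 = 0) (hq : ∀ k ≠ q, 0 ≤ A k) (hp : 0 < A p)
    {l m : ℝ} {a b : Fin d → ℝ} (hab : l + ext a q ≤ m + ext b q) :
    A ⬝ᵥ ext (tropComb l m a b) ≤ A ⬝ᵥ ext a ∧
      (A ⬝ᵥ ext (tropComb l m a b) = A ⬝ᵥ ext a →
        ext (tropComb l m a b) p - ext (tropComb l m a b) q = ext a p - ext a q) := by
  set y := tropComb l m a b
  set u := ext a + (l - min l m) • 1 - ext y
  have hu (k : Fin (d + 1)) : u k = l + ext a k - min (l + ext a k) (m + ext b k) := by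
    simp only [u, y, Pi.sub_apply, Pi.add_apply, Pi.smul_apply, Pi.one_apply, smul_eq_mul,
      ext_tropComb]
    ring
  have huq : u q = 0 := by rw [hu, min_eq_left hab, sub_self]
  have hAu (k : Fin (d + 1)) : 0 ≤ A k * u k := by
    rcases eq_or_ne k q with rfl | hk
    · rw [huq, mul_zero]
    · exact mul_nonneg (hq k hk) (by rw [hu]; linarith [min_le_left (l + ext a k) (m + ext b k)])
  have hsum : A ⬝ᵥ u = A ⬝ᵥ ext a - A ⬝ᵥ ext y := by
    simp only [u, dotProduct_sub, dotProduct_add, dotProduct_smul, hA, smul_zero, add_zero]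
  have hnonneg : 0 ≤ A ⬝ᵥ u := Finset.sum_nonneg fun k _ => hAu k
  refine ⟨by linarith, fun heq => ?_⟩
  have hAup : A p * u p = 0 :=
    (Finset.sum_eq_zero_iff_of_nonneg fun k _ => hAu k).1 (by rw [← dotProduct, hsum, heq, sub_self])
      p (Finset.mem_univ p)
  have hup : u p = 0 := (mul_eq_zero.1 hAup).resolve_left hp.ne'
  have hy (k : Fin (d + 1)) : ext y k = ext a k + (l - min l m) - u k := by simp [u]
  rw [hy p, hy q, hup, huq]
  ring

theorem tropConvex_setOf_dotProduct_ext (hA : A ⬝ᵥ 1 = 0) (hq : ∀ k ≠ q, 0 ≤ A k) (hp : 0 < A p)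
    (c : ℝ) (D : Set ℝ) :
    TropConvex {y | A ⬝ᵥ ext y ≤ c ∧ (A ⬝ᵥ ext y = c → ext y p - ext y q ∈ D)} := by
  have hcomb (a b : Fin d → ℝ) (ha : A ⬝ᵥ ext a ≤ c ∧ (A ⬝ᵥ ext a = c → ext a p - ext a q ∈ D))
      (l m : ℝ) (hab : l + ext a q ≤ m + ext b q) :
      A ⬝ᵥ ext (tropComb l m a b) ≤ c ∧ (A ⬝ᵥ ext (tropComb l m a b) = c →
        ext (tropComb l m a b) p - ext (tropComb l m a b) q ∈ D) := by
    obtain ⟨hle, heq⟩ := dotProduct_ext_tropComb_le hA hq hp hab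
    refine ⟨hle.trans ha.1, fun hc => ?_⟩
    have hac : A ⬝ᵥ ext a = c := le_antisymm ha.1 (hc ▸ hle)
    rw [heq (hc.trans hac.symm)]
    exact ha.2 hac
  intro a ha b hb l m
  rcases le_total (l + ext a q) (m + ext b q) with hab | hba
  · exact hcomb a b ha l m hab
  · rw [tropComb_comm]
    exact hcomb b a hb m l hba

theorem sub_mem_image_of_dotProduct_ext_eq (hA : A ⬝ᵥ 1 = 0) (hq : ∀ k ≠ q, 0 ≤ A k)
    (hp : 0 < A p) {V : Set (Fin d → ℝ)} {c : ℝ} (hV : ∀ v ∈ V, A ⬝ᵥ ext v ≤ c)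
    {y : Fin d → ℝ} (hy : y ∈ tconv V) (hyc : A ⬝ᵥ ext y = c) :
    ext y p - ext y q ∈ (fun v => ext v p - ext v q) '' V := by
  refine (tconv_min ?_ (tropConvex_setOf_dotProduct_ext hA hq hp c _) hy).2 hyc
  exact fun v hv => ⟨hV v hv, fun _ => mem_image_of_mem _ hv⟩

/-- Tropical convexity enters here: the tropical combination of `x ± t • dehom v` with weights
`± t * v 0` is, in homogeneous coordinates, `ext x - |t| • |v| + |t| * |v 0|`. -/
theorem TropConvex.dotProduct_abs_nonneg {P : Set (Fin d → ℝ)} (hP : TropConvex P)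
    (hA : A ⬝ᵥ 1 = 0) (hmax : IsMaxOn (fun y => A ⬝ᵥ ext y) P x)
    (hloc : ∀ w, A ⬝ᵥ ext w = 0 → ∀ᶠ t in 𝓝 (0 : ℝ), x + t • w ∈ P)
    {v : Fin (d + 1) → ℝ} (hv : A ⬝ᵥ v = 0) : 0 ≤ A ⬝ᵥ |v| := by
  set w := dehom v
  have hw : A ⬝ᵥ ext w = 0 := by
    simp only [w, ext_dehom, dotProduct_sub, dotProduct_smul, hA, hv, smul_zero, sub_zero]
  have hev : ∀ᶠ t in 𝓝 (0 : ℝ), x + t • w ∈ P ∧ x + (-t) • w ∈ P :=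
    (hloc w hw).and ((continuous_neg.tendsto' 0 0 neg_zero).eventually (hloc w hw))
  obtain ⟨t, ⟨h₁, h₂⟩, ht⟩ := (infinite_of_mem_nhds 0 hev).nontrivial.exists_ne 0
  have hext : ext (tropComb (t * v 0) (-(t * v 0)) (x + t • w) (x + (-t) • w))
      = ext x - |t| • |v| + (|t| * |v 0|) • 1 := by
    funext k
    have e₁ : t * v 0 + (ext x k + t * (v k - v 0)) = ext x k + t * v k := by ring
    have e₂ : -(t * v 0) + (ext x k + -t * (v k - v 0)) = ext x k - t * v k := by ring
    have e₃ : min (t * v 0) (-(t * v 0)) = -|t * v 0| := by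
      simpa using min_add_sub_eq_sub_abs 0 (t * v 0)
    simp only [ext_tropComb, ext_add_smul, w, ext_dehom, Pi.add_apply, Pi.sub_apply,
      Pi.smul_apply, Pi.one_apply, smul_eq_mul, mul_one, Pi.abs_apply, e₁, e₂, e₃,
      min_add_sub_eq_sub_abs, abs_mul]
    ring
  have hz : A ⬝ᵥ ext (tropComb (t * v 0) (-(t * v 0)) (x + t • w) (x + (-t) • w)) ≤ A ⬝ᵥ ext x :=
    hmax (hP _ h₁ _ h₂ (t * v 0) (-(t * v 0)))
  simp only [hext, dotProduct_add, dotProduct_sub, dotProduct_smul, hA, smul_eq_mul,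
    mul_zero, add_zero] at hz
  nlinarith [abs_pos.2 ht]

/-- Finiteness of `V` enters here: moving inside the maximizing face along `dehom v` would give
`ext · p - ext · q` infinitely many values, all of them taken at generators. -/
theorem nonpos_of_ne_of_isMaxOn_tconv {V : Finset (Fin d → ℝ)} (hA : A ⬝ᵥ 1 = 0)
    (hmax : IsMaxOn (fun y => A ⬝ᵥ ext y) (tconv V) x)
    (hloc : ∀ w, A ⬝ᵥ ext w = 0 → ∀ᶠ t in 𝓝 (0 : ℝ), x + t • w ∈ tconv V)
    (hq : A q < 0) (hnonneg : ∀ k ≠ q, 0 ≤ A k) (hp : 0 < A p) {k : Fin (d + 1)} (hk : k ≠ p) :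
    A k ≤ 0 := by
  by_contra! hAk
  have hpq : p ≠ q := by rintro rfl; linarith
  have hkq : k ≠ q := by rintro rfl; linarith
  set w := dehom (Pi.single p (A k) - Pi.single k (A p))
  have hw : A ⬝ᵥ ext w = 0 := by
    simp only [w, ext_dehom, dotProduct_sub, dotProduct_smul, dotProduct_single, hA, smul_zero]
    ring
  set g : (Fin d → ℝ) → ℝ := fun y => ext y p - ext y q
  have hg (t : ℝ) : g (x + t • w) = g x + t * A k := by
    simp only [g, w, ext_add_smul, ext_dehom, Pi.add_apply, Pi.smul_apply, Pi.sub_apply,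
      Pi.single_eq_same, ne_eq, hk.symm, hpq.symm, hkq.symm, not_false_eq_true, Pi.single_eq_of_ne,
      Pi.one_apply, smul_eq_mul]
    ring
  have hmaps : MapsTo (fun t => g x + t * A k) {t | x + t • w ∈ tconv V} (g '' V) :=
    fun t ht => by
      change g x + t * A k ∈ g '' V
      rw [← hg]
      exact sub_mem_image_of_dotProduct_ext_eq hA hnonneg hp
        (fun v hv => hmax (subset_tconv _ hv)) ht
        (by simp [ext_add_smul, dotProduct_add, dotProduct_smul, hw])
  have hinj : InjOn (fun t => g x + t * A k) {t | x + t • w ∈ tconv V} :=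
    fun t _ s _ h => by simpa [hAk.ne'] using h
  exact infinite_of_mem_nhds 0 (hloc w hw)
    (((V.finite_toSet.image g).subset hmaps.image_subset).of_finite_image hinj)

theorem exists_dotProduct_eq_mul_sub_of_isMaxOn_tconv {V : Finset (Fin d → ℝ)}
    (hA : A ⬝ᵥ 1 = 0) (hA0 : ∃ k, A k ≠ 0) (hmax : IsMaxOn (fun y => A ⬝ᵥ ext y) (tconv V) x)
    (hloc : ∀ w, A ⬝ᵥ ext w = 0 → ∀ᶠ t in 𝓝 (0 : ℝ), x + t • w ∈ tconv V) :
    ∃ p q, p ≠ q ∧ 0 < A p ∧ ∀ v, A ⬝ᵥ v = A p * (v p - v q) := by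
  have hsum : ∑ k, A k = 0 := by rwa [← dotProduct_one]
  obtain ⟨q, -, hq⟩ := Finset.exists_pos_of_sum_zero_of_exists_nonzero (s := Finset.univ) (-A)
    (by simp [hsum]) (by simpa using hA0)
  obtain ⟨p, -, hp⟩ := Finset.exists_pos_of_sum_zero_of_exists_nonzero (s := Finset.univ) A
    hsum (by simpa using hA0)
  have hq : A q < 0 := neg_pos.1 hq
  have hpq : p ≠ q := by rintro rfl; linarith
  have hnonneg (k : Fin (d + 1)) (hk : k ≠ q) : 0 ≤ A k :=
    nonneg_of_ne_of_forall_dotProduct_abs_nonneg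
      (fun _ hv => (tropConvex_tconv _).dotProduct_abs_nonneg hA hmax hloc hv) hq hk
  have hnonpos (k : Fin (d + 1)) (hk : k ≠ p) : A k ≤ 0 :=
    nonpos_of_ne_of_isMaxOn_tconv hA hmax hloc hq hnonneg hp hk
  exact ⟨p, q, hpq, hp, dotProduct_eq_mul_sub_of_nonneg_of_nonpos hA hpq hnonneg hnonpos⟩

end Normals

theorem IsFacet.exists_eq_setOf_isMaxOn_sub {d : ℕ} {V : Finset (Fin d → ℝ)}
    {F : Set (Fin d → ℝ)} (hconv : Convex ℝ (tconv (V : Set (Fin d → ℝ))))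
    (hdim : affineSpan ℝ (tconv (V : Set (Fin d → ℝ))) = ⊤) (hF : IsFacet (tconv ↑V) F) :
    ∃ p q : Fin (d + 1), p ≠ q ∧
      F = {y ∈ tconv ↑V | IsMaxOn (fun z => ext z p - ext z q) (tconv ↑V) y} := by
  obtain ⟨hFne, hFc, hext, hrank⟩ := hF
  replace hrank : Module.finrank ℝ (vectorSpan ℝ F) + 1 = Module.finrank ℝ (Fin d → ℝ) := by
    rwa [Module.finrank_fin_fun]
  obtain ⟨x, hx, f, hf, hmax⟩ := hext.exists_isMaxOn_of_finrank_add_one hconv hdim hFc hFne hrank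
  obtain ⟨A, hA, hfA⟩ := exists_dotProduct_ext_eq f
  have hspan := vectorSpan_eq_ker_of_isMaxOn hx hf (hmax.on_subset hext.subset) hrank
  have hmaxA : IsMaxOn (fun y => A ⬝ᵥ ext y) (tconv ↑V) x := by
    rwa [show ⇑f = _ from funext hfA] at hmax
  have hloc (w : Fin d → ℝ) (hw : A ⬝ᵥ ext w = 0) : ∀ᶠ t in 𝓝 (0 : ℝ), x + t • w ∈ tconv ↑V := by
    have hwF : w ∈ vectorSpan ℝ F := by rwa [hspan, LinearMap.mem_ker, hfA]
    exact (eventually_add_smul_mem_of_mem_intrinsicInterior hx hwF).mono fun _ h => hext.subset h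
  have hA0 : ∃ k, A k ≠ 0 := by
    by_contra! h
    exact hf (LinearMap.ext fun y => by simp [hfA, dotProduct, h])
  obtain ⟨p, q, hpq, hp, hAv⟩ := exists_dotProduct_eq_mul_sub_of_isMaxOn_tconv hA hA0 hmaxA hloc
  have hfg (y : Fin d → ℝ) : f y = A p * (ext y p - ext y q) := by rw [hfA, hAv]
  refine ⟨p, q, hpq, (hext.eq_setOf_isMaxOn hrank hx hf hmax).trans ?_⟩
  ext y
  simp only [mem_ofPred_eq, isMaxOn_iff, hfg, mul_le_mul_iff_right₀ hp]

/-- Every `d`-polytrope has at most `d(d+1)` ordinary facets. -/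
theorem polytrope_facet_upper_bound {d : ℕ} (P : Set (Fin d → ℝ))
    (hP : IsPolytrope P) (hdim : affineSpan ℝ P = ⊤) :
    {F : Set (Fin d → ℝ) | IsFacet P F}.Finite ∧
      {F : Set (Fin d → ℝ) | IsFacet P F}.ncard ≤ d * (d + 1) := by
  obtain ⟨⟨V, rfl⟩, hconv⟩ := hP
  let normalFace (pq : Fin (d + 1) × Fin (d + 1)) : Set (Fin d → ℝ) :=
    {y ∈ tconv ↑V | IsMaxOn (fun z => ext z pq.1 - ext z pq.2) (tconv ↑V) y}
  let pairs : Finset (Fin (d + 1) × Fin (d + 1)) := Finset.univ.offDiag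
  have hsub : {F | IsFacet (tconv ↑V) F} ⊆ normalFace '' pairs := by
    intro F hF
    obtain ⟨p, q, hpq, rfl⟩ := hF.exists_eq_setOf_isMaxOn_sub hconv hdim
    exact ⟨(p, q), by simpa [pairs] using hpq, rfl⟩
  have hfin : (normalFace '' pairs).Finite := pairs.finite_toSet.image normalFace
  refine ⟨hfin.subset hsub, ?_⟩
  calc {F | IsFacet (tconv ↑V) F}.ncard
      ≤ (normalFace '' pairs).ncard := ncard_le_ncard hsub hfin
    _ ≤ pairs.card := (ncard_image_le pairs.finite_toSet).trans_eq (ncard_coe_finset pairs)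
    _ = d * (d + 1) := by
      simp [pairs, Finset.offDiag_card, ← Nat.mul_sub_one, mul_comm]
end
end
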